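/- arXiv:1812.09461 — 2 statements merged into one kernel-verified Lean document; each statement's English description precedes it below -/
import Mathlib

section
/- Let n ≥ 3 and q ≥ 1 be integers and let K_1, …, K_q be positive real numbers. If α in the open positive orthant of ℝ^q satisfies |α|² K_i α_i^{4/(n-2)} = S(α) for every i, then the Hessian of f at α is given, for all indices i, j, by (1/2)·∂²f/∂α_i∂α_j (α) = (4/((n−2) S(α)^{(n-2)/n})) · (−δ_{ij} + α_i α_j / |α|²), where δ_{ij} is the Kronecker delta. -/
/-!
With `S(x) = Σ Kₖ xₖ^p` and `θ p = 2`, the gradient of `f = |x|² / S^θ` factors as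
`∂ⱼ f = 2 S^(-θ-1) Rⱼ` with `Rⱼ(x) = xⱼ S(x) - |x|² Kⱼ xⱼ^(p-1)`. At a critical point every `Rⱼ`
vanishes, so only the derivative of `Rⱼ` contributes to the Hessian: `∂ᵢ∂ⱼ f = 2 S^(-θ-1) ∂ᵢ Rⱼ`.
The critical relation `Kₖ αₖ^(p-2) = S/|α|²` turns `∂ᵢ Rⱼ` into `(p - 2) S (-δᵢⱼ + αᵢαⱼ/|α|²)`,
and `p - 2 = 4/(n-2)` for `p = 2n/(n-2)`, `θ = (n-2)/n`.
-/

open Finset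

noncomputable section

variable {ι : Type*} [Fintype ι]

def weightedPowerSum (K : ι → ℝ) (p : ℝ) (x : ι → ℝ) : ℝ := ∑ k, K k * x k ^ p

def criticalDefect (K : ι → ℝ) (p : ℝ) (j : ι) (x : ι → ℝ) : ℝ :=
  x j * weightedPowerSum K p x - (∑ k, x k ^ 2) * (K j * x j ^ (p - 1))

variable (K : ι → ℝ) (p : ℝ) {x : ι → ℝ}

theorem hasFDerivAt_weightedPowerSum (hx : ∀ k, x k ≠ 0) :
    HasFDerivAt (weightedPowerSum K p)
      (∑ k, K k • (p * x k ^ (p - 1)) •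
        ContinuousLinearMap.proj (R := ℝ) (φ := fun _ : ι => ℝ) k) x :=
  HasFDerivAt.fun_sum fun k _ =>
    ((hasFDerivAt_apply k x).rpow_const (Or.inl (hx k))).const_mul (K k)

theorem fderiv_weightedPowerSum_apply_single [DecidableEq ι] (hx : ∀ k, x k ≠ 0) (m : ι) :
    fderiv ℝ (weightedPowerSum K p) x (Pi.single m 1) = K m * (p * x m ^ (p - 1)) := by
  simp [(hasFDerivAt_weightedPowerSum K p hx).fderiv, Pi.single_apply]

theorem hasFDerivAt_sum_sq (x : ι → ℝ) :
    HasFDerivAt (fun y : ι → ℝ => ∑ k, y k ^ 2)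
      (∑ k, (2 * x k) • ContinuousLinearMap.proj (R := ℝ) (φ := fun _ : ι => ℝ) k) x :=
  HasFDerivAt.fun_sum fun k _ => by
    simpa using (hasFDerivAt_apply (𝕜 := ℝ) (F' := fun _ : ι => ℝ) k x).pow 2

theorem fderiv_sum_sq_apply_single [DecidableEq ι] (x : ι → ℝ) (m : ι) :
    fderiv ℝ (fun y : ι → ℝ => ∑ k, y k ^ 2) x (Pi.single m 1) = 2 * x m := by
  simp [(hasFDerivAt_sum_sq x).fderiv, Pi.single_apply]

variable {p} {θ : ℝ}

theorem fderiv_div_rpow_apply_single [DecidableEq ι] (hθp : θ * p = 2) (hx : ∀ k, x k ≠ 0)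
    (hS : 0 < weightedPowerSum K p x) (j : ι) :
    fderiv ℝ (fun y => (∑ k, y k ^ 2) / weightedPowerSum K p y ^ θ) x (Pi.single j 1)
      = 2 * weightedPowerSum K p x ^ (-θ - 1) * criticalDefect K p j x := by
  have hS' := (hasFDerivAt_weightedPowerSum K p hx).differentiableAt.hasFDerivAt
  have hSθ := hS'.rpow_const (p := θ) (Or.inl hS.ne')
  have hinv := (hasDerivAt_inv (Real.rpow_pos_of_pos hS θ).ne').comp_hasFDerivAt x hSθ
  have hf := (hasFDerivAt_sum_sq x).differentiableAt.hasFDerivAt.fun_mul hinv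
  simp only [Function.comp_def, ← div_eq_mul_inv] at hf
  rw [hf.fderiv]
  simp only [add_apply, smul_apply, smul_eq_mul,
    fderiv_weightedPowerSum_apply_single K p hx, fderiv_sum_sq_apply_single, criticalDefect,
    Real.rpow_sub_one hS.ne', Real.rpow_neg hS.le]
  field_simp
  linear_combination (-(∑ k, x k ^ 2) * K j * x j ^ (p - 1)) * hθp

theorem fderiv_criticalDefect_apply_single [DecidableEq ι] (hx : ∀ k, x k ≠ 0) (i j : ι) :
    fderiv ℝ (criticalDefect K p j) x (Pi.single i 1)
      = (if i = j then 1 else 0) *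
          (weightedPowerSum K p x - (p - 1) * (∑ k, x k ^ 2) * (K j * x j ^ (p - 2)))
        + p * x j * (K i * x i ^ (p - 1)) - 2 * x i * (K j * x j ^ (p - 1)) := by
  have hS' := (hasFDerivAt_weightedPowerSum K p hx).differentiableAt.hasFDerivAt
  have hA' := (hasFDerivAt_sum_sq x).differentiableAt.hasFDerivAt
  have hxj := hasFDerivAt_apply (𝕜 := ℝ) (F' := fun _ : ι => ℝ) j x
  have hR : HasFDerivAt (criticalDefect K p j) _ x := (hxj.fun_mul hS').fun_sub
    (hA'.fun_mul ((hxj.rpow_const (p := p - 1) (Or.inl (hx j))).const_mul (K j)))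
  rw [hR.fderiv]
  simp only [sub_apply, add_apply, smul_apply, smul_eq_mul, ContinuousLinearMap.proj_apply,
    fderiv_weightedPowerSum_apply_single K p hx, fderiv_sum_sq_apply_single, Pi.single_apply]
  rw [show p - 1 - 1 = p - 2 by ring]
  rcases eq_or_ne i j with rfl | hij
  · simp only [if_true]; ring
  · simp only [if_neg hij, if_neg hij.symm]; ring

theorem fderiv_div_rpow_apply_single_eventuallyEq [DecidableEq ι] (hθp : θ * p = 2)
    (hx : ∀ k, x k ≠ 0) (hS : 0 < weightedPowerSum K p x) (j : ι) :
    (fun y => fderiv ℝ (fun z => (∑ k, z k ^ 2) / weightedPowerSum K p z ^ θ) y (Pi.single j 1))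
      =ᶠ[nhds x] fun y => 2 * weightedPowerSum K p y ^ (-θ - 1) * criticalDefect K p j y := by
  have hx' : ∀ᶠ y in nhds x, ∀ k, y k ≠ 0 :=
    Filter.eventually_all.2 fun k => (continuous_apply k).continuousAt.eventually_ne (hx k)
  have hS' : ∀ᶠ y in nhds x, 0 < weightedPowerSum K p y :=
    (hasFDerivAt_weightedPowerSum K p hx).continuousAt.eventually (lt_mem_nhds hS)
  filter_upwards [hx', hS'] with y hy hSy
  exact fderiv_div_rpow_apply_single K hθp hy hSy j

theorem fderiv_fderiv_div_rpow_apply_single [DecidableEq ι] (hθp : θ * p = 2) (hx : ∀ k, x k ≠ 0)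
    (hS : 0 < weightedPowerSum K p x) {j : ι} (hR : criticalDefect K p j x = 0) (i : ι) :
    fderiv ℝ (fun y => fderiv ℝ (fun z => (∑ k, z k ^ 2) / weightedPowerSum K p z ^ θ) y
        (Pi.single j 1)) x (Pi.single i 1)
      = 2 * weightedPowerSum K p x ^ (-θ - 1) *
          fderiv ℝ (criticalDefect K p j) x (Pi.single i 1) := by
  have hc := ((hasFDerivAt_weightedPowerSum K p hx).rpow_const (p := -θ - 1)
    (Or.inl hS.ne')).const_mul 2
  have hR' : DifferentiableAt ℝ (criticalDefect K p j) x := by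
    have := (hasFDerivAt_weightedPowerSum K p hx).differentiableAt
    unfold criticalDefect
    fun_prop (disch := exact Or.inl (hx j))
  rw [(fderiv_div_rpow_apply_single_eventuallyEq K hθp hx hS j).fderiv_eq,
    (hc.fun_mul hR'.hasFDerivAt).fderiv]
  simp [hR, mul_assoc]

theorem half_fderiv_fderiv_div_rpow_apply_single_of_critical [DecidableEq ι] (hθp : θ * p = 2)
    (hx : ∀ k, x k ≠ 0) (hS : 0 < weightedPowerSum K p x)
    (hcrit : ∀ k, (∑ m, x m ^ 2) * (K k * x k ^ (p - 2)) = weightedPowerSum K p x) (i j : ι) :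
    (1 / 2) * fderiv ℝ (fun y => fderiv ℝ (fun z => (∑ k, z k ^ 2) / weightedPowerSum K p z ^ θ) y
        (Pi.single j 1)) x (Pi.single i 1)
      = (p - 2) / weightedPowerSum K p x ^ θ *
          (-(if i = j then 1 else 0) + x i * x j / ∑ k, x k ^ 2) := by
  have hA : (∑ m, x m ^ 2) ≠ 0 := left_ne_zero_of_mul ((hcrit i).trans_ne hS.ne')
  have hK : ∀ k, K k * x k ^ (p - 2) = weightedPowerSum K p x / ∑ m, x m ^ 2 := fun k => by
    rw [← hcrit k]; field_simp
  have hK' : ∀ k, K k * x k ^ (p - 1) = weightedPowerSum K p x / (∑ m, x m ^ 2) * x k := fun k => by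
    rw [← hK k, show p - 1 = p - 2 + 1 by ring, Real.rpow_add_one (hx k)]; ring
  have hR : criticalDefect K p j x = 0 := by
    rw [criticalDefect, hK' j]; field_simp; ring
  rw [fderiv_fderiv_div_rpow_apply_single K hθp hx hS hR, fderiv_criticalDefect_apply_single K hx,
    hK, hK', hK', Real.rpow_sub_one hS.ne', Real.rpow_neg hS.le]
  field_simp
  ring

end

theorem stmt_4_general (n q : ℕ) (hn : 3 ≤ n)
    (K : Fin q → ℝ) (hK : ∀ i, 0 < K i)
    (f : (Fin q → ℝ) → ℝ)
    (hf : f = fun α => (∑ i, α i ^ 2) /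
        (∑ i, K i * α i ^ (2 * (n : ℝ) / ((n : ℝ) - 2))) ^ (((n : ℝ) - 2) / (n : ℝ)))
    (α : Fin q → ℝ) (hα : ∀ i, 0 < α i)
    (hcrit : ∀ i, (∑ j, α j ^ 2) * (K i * α i ^ ((4 : ℝ) / ((n : ℝ) - 2)))
      = ∑ j, K j * α j ^ (2 * (n : ℝ) / ((n : ℝ) - 2))) :
    ∀ i j : Fin q,
      (1 / 2) * fderiv ℝ (fun x => fderiv ℝ f x (Pi.single j 1)) α (Pi.single i 1)
        = 4 / (((n : ℝ) - 2) *
            (∑ k, K k * α k ^ (2 * (n : ℝ) / ((n : ℝ) - 2))) ^ (((n : ℝ) - 2) / (n : ℝ))) *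
          (-(if i = j then (1 : ℝ) else 0) + α i * α j / ∑ k, α k ^ 2) := by
  intro i j
  subst hf
  have hn2 : (0 : ℝ) < n - 2 := by
    have : (3 : ℝ) ≤ n := by exact_mod_cast hn
    linarith
  have hθp : ((n : ℝ) - 2) / n * (2 * n / (n - 2)) = 2 := by field_simp
  have hp2 : 2 * (n : ℝ) / (n - 2) - 2 = 4 / (n - 2) := by field_simp; ring
  have hS : 0 < weightedPowerSum K (2 * n / (n - 2)) α :=
    sum_pos (fun k _ => mul_pos (hK k) (Real.rpow_pos_of_pos (hα k) _)) ⟨i, mem_univ i⟩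
  rw [div_mul_eq_div_div, ← hp2]
  exact half_fderiv_fderiv_div_rpow_apply_single_of_critical K hθp (fun k => (hα k).ne') hS
    (by rwa [hp2]) i j

/-- Hessian of the reduced multi-bubble energy
`f(α) = (Σ αᵢ²)/(Σ Kᵢ αᵢ^{2n/(n-2)})^{(n-2)/n}` at a critical point (characterized by
`|α|²·Kᵢαᵢ^{4/(n-2)} = S(α)` for all `i`):
`(1/2)·∂²f/∂αᵢ∂αⱼ(α) = (4/((n−2)S(α)^{(n-2)/n}))·(−δᵢⱼ + αᵢαⱼ/|α|²)`. -/
theorem stmt_4 (n q : ℕ) (hn : 3 ≤ n) (hq : 1 ≤ q)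
    (K : Fin q → ℝ) (hK : ∀ i, 0 < K i)
    (f : (Fin q → ℝ) → ℝ)
    (hf : f = fun α => (∑ i, α i ^ 2) /
        (∑ i, K i * α i ^ (2 * (n : ℝ) / ((n : ℝ) - 2))) ^ (((n : ℝ) - 2) / (n : ℝ)))
    (α : Fin q → ℝ) (hα : ∀ i, 0 < α i)
    (hcrit : ∀ i, (∑ j, α j ^ 2) * (K i * α i ^ ((4 : ℝ) / ((n : ℝ) - 2)))
      = ∑ j, K j * α j ^ (2 * (n : ℝ) / ((n : ℝ) - 2))) :
    ∀ i j : Fin q,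
      (1 / 2) * fderiv ℝ (fun x => fderiv ℝ f x (Pi.single j 1)) α (Pi.single i 1)
        = 4 / (((n : ℝ) - 2) *
            (∑ k, K k * α k ^ (2 * (n : ℝ) / ((n : ℝ) - 2))) ^ (((n : ℝ) - 2) / (n : ℝ))) *
          (-(if i = j then (1 : ℝ) else 0) + α i * α j / ∑ k, α k ^ 2) :=
  stmt_4_general n q hn K hK f hf α hα hcrit
end

section
/- Let n ≥ 3 be an integer and let α, β be real numbers with α + β = 2n/(n−2) and α > n/(n−2) > β ≥ 1. Then there exists a constant C > 0, depending only on n and β, such that for all a, b ∈ ℝ^n and all λ, μ > 0: ∫_{ℝ^n} U_{a,λ}(x)^α U_{b,μ}(x)^β dx ≤ C · ε(a, b, λ, μ)^β, where ε(a, b, λ, μ) = (μ/λ + λ/μ + λμ |a−b|²)^{−(n−2)/2}. -/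
open MeasureTheory

/-- The standard bubble `U_{a,λ}(x) = (λ/(1+λ²|x−a|²))^{(n-2)/2}` on `ℝⁿ`. -/
noncomputable def bubble (n : ℕ) (a : EuclideanSpace ℝ (Fin n)) (lam : ℝ)
    (x : EuclideanSpace ℝ (Fin n)) : ℝ :=
  (lam / (1 + lam ^ 2 * ‖x - a‖ ^ 2)) ^ (((n : ℝ) - 2) / 2)

/-!
Substituting `x = a + λ⁻¹ y` turns the integral into
`∫ (1 + |y|²)^(-p) (m / (1 + m² |y - c|²))^q dy` with `p = (n-2)α/2`, `q = (n-2)β/2`,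
`p + q = n`, `m = μ/λ`, `c = λ(b - a)`, and turns `ε^β` into `D^(-q)` with
`D = m + 1/m + m|c|²`. Since `D ≤ 2 (m (1 + |y|²) + (1 + m²|y - c|²)/m)`, the integrand times
`D^q` is at most `4^q ((1 + |y|²)^(-p) + (1 + |y|²)^(q-p) |y - c|^(-2q))`. The first term is
integrable as `2p > n`. The integral of the second is bounded uniformly in `c` by splitting at
`|y - c| = (1 + |c|)/2`: near `c` the weight is `≲ (1 + |c|)^(-2(p-q))` while the singularity
contributes `≲ (1 + |c|)^(n-2q)`, and far from `c` the integrand is `≲ (1 + |y|²)^(-p)`.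
-/

open Metric Set Module

namespace Real

lemma add_rpow_le_two_rpow_mul_rpow_add_rpow {a b p : ℝ} (ha : 0 ≤ a) (hb : 0 ≤ b)
    (hp : 0 ≤ p) : (a + b) ^ p ≤ 2 ^ p * (a ^ p + b ^ p) := by
  rcases le_total a b with h | h
  · calc (a + b) ^ p ≤ (2 * b) ^ p := by gcongr; linarith
      _ = 2 ^ p * b ^ p := mul_rpow zero_le_two hb
      _ ≤ 2 ^ p * (a ^ p + b ^ p) := by gcongr; exact le_add_of_nonneg_left (by positivity)
  · calc (a + b) ^ p ≤ (2 * a) ^ p := by gcongr; linarith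
      _ = 2 ^ p * a ^ p := mul_rpow zero_le_two ha
      _ ≤ 2 ^ p * (a ^ p + b ^ p) := by gcongr; exact le_add_of_nonneg_right (by positivity)

lemma rpow_neg_le_of_le_mul {x y k e : ℝ} (hy : 0 < y) (hk : 0 < k) (he : 0 ≤ e)
    (h : y ≤ k * x) : x ^ (-e) ≤ k ^ e * y ^ (-e) := by
  have hyx : y / k ≤ x := (div_le_iff₀' hk).2 h
  calc x ^ (-e) ≤ (y / k) ^ (-e) := rpow_le_rpow_of_nonpos (by positivity) hyx (by linarith)
    _ = k ^ e * y ^ (-e) := by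
      rw [div_rpow hy.le hk.le, rpow_neg hk.le, div_eq_mul_inv, inv_inv, mul_comm]
end Real

lemma add_one_div_add_mul_sq_mul_div_le {m r u w : ℝ} (hm : 0 < m) (hr : 0 < r)
    (hw : w ≤ u + r) (hw0 : 0 ≤ w) :
    (m + 1 / m + m * w ^ 2) * (m / (1 + m ^ 2 * r ^ 2)) ≤ 2 * (1 + (1 + u ^ 2) / r ^ 2) := by
  have hw2 : w ^ 2 ≤ 2 * u ^ 2 + 2 * r ^ 2 := by nlinarith [sq_nonneg (u - r)]
  field_simp
  nlinarith [mul_le_mul_of_nonneg_left hw2 (mul_nonneg (sq_nonneg m) (sq_nonneg r)),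
    sq_nonneg u, mul_nonneg (sq_nonneg m) (sq_nonneg r),
    mul_nonneg (mul_nonneg (sq_nonneg m) (sq_nonneg r)) (sq_nonneg u)]

lemma one_add_norm_sq_rpow_mul_norm_sub_rpow_le {F : Type*} [SeminormedAddCommGroup F]
    {s t : ℝ} (hs : 0 ≤ s) (ht : 0 ≤ t) (c y : F) :
    (1 + ‖y‖ ^ 2) ^ (-t) * ‖y - c‖ ^ (-s) ≤
      8 ^ t * ((1 + ‖c‖) ^ 2) ^ (-t) *
          (ball (0 : F) ((1 + ‖c‖) / 2)).indicator (fun z => ‖z‖ ^ (-s)) (y - c) +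
        9 ^ (s / 2) * (1 + ‖y‖ ^ 2) ^ (-(t + s / 2)) := by
  have hc_le := norm_le_norm_add_norm_sub' c y
  have hy_le := norm_le_norm_add_norm_sub' y c
  rw [norm_sub_rev c y] at hc_le
  by_cases hnear : ‖y - c‖ < (1 + ‖c‖) / 2
  · rw [indicator_of_mem (mem_ball_zero_iff.2 hnear)]
    have hweight : (1 + ‖y‖ ^ 2) ^ (-t) ≤ 8 ^ t * ((1 + ‖c‖) ^ 2) ^ (-t) :=
      Real.rpow_neg_le_of_le_mul (by positivity) (by norm_num) ht (by
        have : 1 + ‖c‖ ≤ 2 * (1 + ‖y‖) := by linarith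
        nlinarith [sq_nonneg (1 - ‖y‖), norm_nonneg c])
    calc (1 + ‖y‖ ^ 2) ^ (-t) * ‖y - c‖ ^ (-s)
        ≤ 8 ^ t * ((1 + ‖c‖) ^ 2) ^ (-t) * ‖y - c‖ ^ (-s) := by gcongr
      _ ≤ _ := le_add_of_nonneg_right (by positivity)
  · rw [indicator_of_notMem (by simpa using hnear), mul_zero, zero_add]
    have hr : 0 < ‖y - c‖ := by linarith [norm_nonneg c]
    have hfar : ‖y - c‖ ^ (-s) ≤ 9 ^ (s / 2) * (1 + ‖y‖ ^ 2) ^ (-(s / 2)) := by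
      rw [← Real.sqrt_sq hr.le, Real.sqrt_eq_rpow, ← Real.rpow_mul (by positivity),
        show 1 / 2 * -s = -(s / 2) by ring]
      exact Real.rpow_neg_le_of_le_mul (by positivity) (by norm_num) (by positivity)
        (by nlinarith [norm_nonneg y, norm_nonneg c])
    calc (1 + ‖y‖ ^ 2) ^ (-t) * ‖y - c‖ ^ (-s)
        ≤ (1 + ‖y‖ ^ 2) ^ (-t) * (9 ^ (s / 2) * (1 + ‖y‖ ^ 2) ^ (-(s / 2))) := by gcongr
      _ = 9 ^ (s / 2) * (1 + ‖y‖ ^ 2) ^ (-(t + s / 2)) := by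
        rw [neg_add, Real.rpow_add (by positivity)]
        ring

lemma one_add_norm_sq_rpow_mul_div_rpow_le {F : Type*} [NormedAddCommGroup F] {p q m : ℝ}
    (hq : 0 ≤ q) (hm : 0 < m) {c y : F} (hyc : y ≠ c) :
    (1 + ‖y‖ ^ 2) ^ (-p) * (m / (1 + m ^ 2 * ‖y - c‖ ^ 2)) ^ q ≤
      4 ^ q * ((1 + ‖y‖ ^ 2) ^ (-p) + (1 + ‖y‖ ^ 2) ^ (-(p - q)) * ‖y - c‖ ^ (-(2 * q))) *
        (m + 1 / m + m * ‖c‖ ^ 2) ^ (-q) := by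
  set Y := 1 + ‖y‖ ^ 2
  set r := ‖y - c‖
  set D := m + 1 / m + m * ‖c‖ ^ 2
  set k := m / (1 + m ^ 2 * r ^ 2)
  have hY : 0 < Y := by positivity
  have hr : 0 < r := norm_pos_iff.2 (sub_ne_zero.2 hyc)
  have hD : 0 < D := by positivity
  have hk : 0 < k := by positivity
  have hDk : D * k ≤ 2 * (1 + Y / r ^ 2) := add_one_div_add_mul_sq_mul_div_le hm hr
    (by have := norm_le_norm_add_norm_sub' c y; rwa [norm_sub_rev] at this) (norm_nonneg c)
  have hpow : (D * k) ^ q ≤ 4 ^ q * (1 + Y ^ q * r ^ (-(2 * q))) := by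
    calc (D * k) ^ q ≤ (2 * (1 + Y / r ^ 2)) ^ q := by gcongr
      _ = 2 ^ q * (1 + Y / r ^ 2) ^ q := Real.mul_rpow zero_le_two (by positivity)
      _ ≤ 2 ^ q * (2 ^ q * (1 ^ q + (Y / r ^ 2) ^ q)) := by
        gcongr
        exact Real.add_rpow_le_two_rpow_mul_rpow_add_rpow zero_le_one (by positivity) hq
      _ = 4 ^ q * (1 + Y ^ q * r ^ (-(2 * q))) := by
        rw [Real.one_rpow, Real.div_rpow hY.le (by positivity), ← Real.rpow_natCast r 2,
          ← Real.rpow_mul hr.le, Real.rpow_neg hr.le, ← mul_assoc,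
          ← Real.mul_rpow zero_le_two zero_le_two]
        norm_num [div_eq_mul_inv]
  calc Y ^ (-p) * k ^ q = Y ^ (-p) * (D * k) ^ q * D ^ (-q) := by
        rw [Real.mul_rpow hD.le hk.le, Real.rpow_neg hD.le]
        field_simp
    _ ≤ Y ^ (-p) * (4 ^ q * (1 + Y ^ q * r ^ (-(2 * q)))) * D ^ (-q) := by gcongr
    _ = 4 ^ q * (Y ^ (-p) + Y ^ (-(p - q)) * r ^ (-(2 * q))) * D ^ (-q) := by
        rw [show -(p - q) = -p + q by ring, Real.rpow_add hY]
        ring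

section HaarMeasure

variable {E : Type*} [NormedAddCommGroup E] [NormedSpace ℝ E] [FiniteDimensional ℝ E]
  [MeasurableSpace E] [BorelSpace E] (μ : Measure E) [μ.IsAddHaarMeasure]

lemma integrableOn_ball_norm_rpow_neg [Nontrivial E] {s : ℝ} (hs : s < finrank ℝ E) (r : ℝ) :
    IntegrableOn (fun x : E => ‖x‖ ^ (-s)) (ball 0 r) μ := by
  rw [integrableOn_fun_norm_addHaar μ (f := fun t => t ^ (-s))]
  rcases le_or_gt r 0 with hr | hr
  · simp [Ioo_eq_empty_of_le hr]
  have hexp : -1 < (finrank ℝ E : ℝ) - 1 - s := by linarith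
  refine ((intervalIntegral.integrableOn_Ioo_rpow_iff hr).2 hexp).congr_fun (fun y hy => ?_)
    measurableSet_Ioo
  rw [smul_eq_mul, ← Real.rpow_natCast, ← Real.rpow_add hy.1, Nat.cast_sub finrank_pos]
  ring_nf

lemma setIntegral_ball_norm_rpow_neg {R : ℝ} (hR : 0 < R) (s : ℝ) :
    ∫ x in ball (0 : E) R, ‖x‖ ^ (-s) ∂μ
      = R ^ ((finrank ℝ E : ℝ) - s) * ∫ x in ball (0 : E) 1, ‖x‖ ^ (-s) ∂μ := by
  have h := Measure.setIntegral_comp_smul_of_pos μ (fun x : E => ‖x‖ ^ (-s)) (ball 0 1) hR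
  rw [smul_unitBall_of_pos hR] at h
  simp only [norm_smul, Real.norm_of_nonneg hR.le, Real.mul_rpow hR.le (norm_nonneg _),
    integral_const_mul, smul_eq_mul, Real.rpow_neg hR.le] at h
  rw [Real.rpow_sub hR, Real.rpow_natCast]
  field_simp at h ⊢
  linarith

lemma exists_integral_one_add_norm_sq_rpow_mul_norm_sub_rpow_le {s t : ℝ} (hs : 0 ≤ s)
    (ht : 0 ≤ t) (hsn : s < finrank ℝ E) (hst : (finrank ℝ E : ℝ) < s + 2 * t) :
    ∃ B, ∀ c : E, Integrable (fun y => (1 + ‖y‖ ^ 2) ^ (-t) * ‖y - c‖ ^ (-s)) μ ∧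
      ∫ y, (1 + ‖y‖ ^ 2) ^ (-t) * ‖y - c‖ ^ (-s) ∂μ ≤ B := by
  have : Nontrivial E := finrank_pos_iff.1 (by exact_mod_cast hs.trans_lt hsn)
  have hA : Integrable (fun y : E => (1 + ‖y‖ ^ 2) ^ (-(t + s / 2))) μ := by
    convert integrable_rpow_neg_one_add_norm_sq (μ := μ) (r := s + 2 * t) hst using 3
    ring
  set K := ∫ z in ball (0 : E) 1, ‖z‖ ^ (-s) ∂μ
  have hK : 0 ≤ K := setIntegral_nonneg measurableSet_ball fun z _ => by positivity
  refine ⟨8 ^ t * K + 9 ^ (s / 2) * ∫ y, (1 + ‖y‖ ^ 2) ^ (-(t + s / 2)) ∂μ, fun c => ?_⟩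
  set w := 1 + ‖c‖
  have hw : 1 ≤ w := le_add_of_nonneg_right (norm_nonneg c)
  have hg := (integrableOn_ball_norm_rpow_neg μ hsn (w / 2)).integrable_indicator
    measurableSet_ball
  have hG := ((hg.comp_sub_right c).const_mul (8 ^ t * (w ^ 2) ^ (-t))).add
    (hA.const_mul (9 ^ (s / 2)))
  have hle := one_add_norm_sq_rpow_mul_norm_sub_rpow_le hs ht c
  have hf : Integrable (fun y => (1 + ‖y‖ ^ 2) ^ (-t) * ‖y - c‖ ^ (-s)) μ :=
    hG.mono' (by fun_prop) (ae_of_all _ fun y => by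
      rw [Real.norm_of_nonneg (by positivity)]; exact hle y)
  have hdecay : (w ^ 2) ^ (-t) * (w / 2) ^ ((finrank ℝ E : ℝ) - s) ≤ 1 := by
    calc (w ^ 2) ^ (-t) * (w / 2) ^ ((finrank ℝ E : ℝ) - s)
        ≤ w ^ (-(2 * t)) * w ^ ((finrank ℝ E : ℝ) - s) := by
          rw [← Real.rpow_natCast, ← Real.rpow_mul (by positivity)]
          gcongr
          · push_cast; linarith
          · linarith
      _ ≤ 1 := by
          rw [← Real.rpow_add (by positivity)]
          exact Real.rpow_le_one_of_one_le_of_nonpos hw (by linarith)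
  refine ⟨hf, (integral_mono hf hG hle).trans ?_⟩
  simp only [Pi.add_apply]
  rw [integral_add ((hg.comp_sub_right c).const_mul _) (hA.const_mul _), integral_const_mul,
    integral_const_mul, integral_sub_right_eq_self, integral_indicator measurableSet_ball,
    setIntegral_ball_norm_rpow_neg μ (by positivity)]
  gcongr ?_ + _
  calc 8 ^ t * (w ^ 2) ^ (-t) * ((w / 2) ^ ((finrank ℝ E : ℝ) - s) * K)
      = 8 ^ t * ((w ^ 2) ^ (-t) * (w / 2) ^ ((finrank ℝ E : ℝ) - s)) * K := by ring
    _ ≤ 8 ^ t * K := by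
      gcongr
      exact (mul_le_mul_of_nonneg_left hdecay (by positivity)).trans_eq (mul_one _)

lemma exists_integral_one_add_norm_sq_rpow_mul_div_rpow_le {p q : ℝ} (hq : 0 < q)
    (hpq : p + q = finrank ℝ E) (hqn : 2 * q < finrank ℝ E) :
    ∃ C, 0 < C ∧ ∀ (c : E) (m : ℝ), 0 < m →
      ∫ y, (1 + ‖y‖ ^ 2) ^ (-p) * (m / (1 + m ^ 2 * ‖y - c‖ ^ 2)) ^ q ∂μ ≤
        C * (m + 1 / m + m * ‖c‖ ^ 2) ^ (-q) := by
  have : Nontrivial E :=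
    finrank_pos_iff (R := ℝ).1 (by exact_mod_cast (show (0 : ℝ) < finrank ℝ E by linarith))
  obtain ⟨B, hB⟩ := exists_integral_one_add_norm_sq_rpow_mul_norm_sub_rpow_le μ
    (s := 2 * q) (t := p - q) (by positivity) (by linarith) hqn (by linarith)
  have hA : Integrable (fun y : E => (1 + ‖y‖ ^ 2) ^ (-p)) μ := by
    convert integrable_rpow_neg_one_add_norm_sq (μ := μ) (r := 2 * p) (by linarith) using 3
    ring
  set A := ∫ y, (1 + ‖y‖ ^ 2) ^ (-p) ∂μ
  refine ⟨max (4 ^ q * (A + B)) 1, lt_max_of_lt_right one_pos, fun c m hm => ?_⟩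
  obtain ⟨hint, hle⟩ := hB c
  have hD : 0 < m + 1 / m + m * ‖c‖ ^ 2 := by positivity
  calc ∫ y, (1 + ‖y‖ ^ 2) ^ (-p) * (m / (1 + m ^ 2 * ‖y - c‖ ^ 2)) ^ q ∂μ
      ≤ ∫ y, 4 ^ q * ((1 + ‖y‖ ^ 2) ^ (-p) + (1 + ‖y‖ ^ 2) ^ (-(p - q)) * ‖y - c‖ ^ (-(2 * q))) *
          (m + 1 / m + m * ‖c‖ ^ 2) ^ (-q) ∂μ :=
        integral_mono_of_nonneg (ae_of_all _ fun y => by positivity)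
          (((hA.add hint).const_mul _).mul_const _)
          ((Measure.ae_ne μ c).mono fun y hy => one_add_norm_sq_rpow_mul_div_rpow_le hq.le hm hy)
    _ = 4 ^ q * (A + ∫ y, (1 + ‖y‖ ^ 2) ^ (-(p - q)) * ‖y - c‖ ^ (-(2 * q)) ∂μ) *
          (m + 1 / m + m * ‖c‖ ^ 2) ^ (-q) := by
        rw [integral_mul_const, integral_const_mul, integral_add hA hint]
    _ ≤ max (4 ^ q * (A + B)) 1 * (m + 1 / m + m * ‖c‖ ^ 2) ^ (-q) := by
        gcongr
        exact le_max_of_le_left (by gcongr)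

end HaarMeasure

lemma bubble_add_inv_smul {n : ℕ} (a b : EuclideanSpace ℝ (Fin n)) {lam : ℝ} (hlam : 0 < lam)
    (mu : ℝ) (y : EuclideanSpace ℝ (Fin n)) :
    bubble n b mu (a + lam⁻¹ • y) =
      (mu / (1 + (mu / lam) ^ 2 * ‖y - lam • (b - a)‖ ^ 2)) ^ (((n : ℝ) - 2) / 2) := by
  have hv : a + lam⁻¹ • y - b = lam⁻¹ • (y - lam • (b - a)) := by
    rw [smul_sub, smul_smul, inv_mul_cancel₀ hlam.ne', one_smul]
    abel
  rw [bubble, hv, norm_smul, Real.norm_of_nonneg (inv_nonneg.2 hlam.le), mul_pow, div_pow,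
    ← mul_assoc, inv_pow, div_eq_mul_inv (mu ^ 2)]

lemma integral_bubble_rpow_mul_bubble_rpow {n : ℕ} {α β : ℝ}
    (hαβ : ((n : ℝ) - 2) / 2 * α + ((n : ℝ) - 2) / 2 * β = n) (a b : EuclideanSpace ℝ (Fin n))
    {lam mu : ℝ} (hlam : 0 < lam) (hmu : 0 < mu) :
    ∫ x, bubble n a lam x ^ α * bubble n b mu x ^ β =
      ∫ y, (1 + ‖y‖ ^ 2) ^ (-(((n : ℝ) - 2) / 2 * α)) *
        (mu / lam / (1 + (mu / lam) ^ 2 * ‖y - lam • (b - a)‖ ^ 2)) ^ (((n : ℝ) - 2) / 2 * β) := by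
  set ν := ((n : ℝ) - 2) / 2
  have hpt : ∀ y, bubble n a lam (a + lam⁻¹ • y) ^ α * bubble n b mu (a + lam⁻¹ • y) ^ β =
      lam ^ n * ((1 + ‖y‖ ^ 2) ^ (-(ν * α)) *
        (mu / lam / (1 + (mu / lam) ^ 2 * ‖y - lam • (b - a)‖ ^ 2)) ^ (ν * β)) := by
    intro y
    have hY : 0 < 1 + ‖y‖ ^ 2 := by positivity
    set X := 1 + (mu / lam) ^ 2 * ‖y - lam • (b - a)‖ ^ 2
    have hcenter :
        (lam / (1 + ‖y‖ ^ 2)) ^ (ν * α) = lam ^ (ν * α) * (1 + ‖y‖ ^ 2) ^ (-(ν * α)) := by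
      rw [Real.div_rpow hlam.le hY.le, Real.rpow_neg hY.le, div_eq_mul_inv]
    have hother : (mu / X) ^ (ν * β) = lam ^ (ν * β) * (mu / lam / X) ^ (ν * β) := by
      rw [← Real.mul_rpow hlam.le (by positivity), mul_div_assoc', mul_div_cancel₀ mu hlam.ne']
    rw [bubble_add_inv_smul a b hlam, bubble_add_inv_smul a a hlam, div_self hlam.ne', sub_self,
      smul_zero, sub_zero, one_pow, one_mul, ← Real.rpow_mul (by positivity),
      ← Real.rpow_mul (by positivity), hcenter, hother, ← Real.rpow_natCast lam n, ← hαβ,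
      Real.rpow_add hlam]
    ring
  have hcov := Measure.integral_comp_inv_smul_of_nonneg volume
    (fun z => bubble n a lam (a + z) ^ α * bubble n b mu (a + z) ^ β) hlam.le
  rw [integral_add_left_eq_self (fun x => bubble n a lam x ^ α * bubble n b mu x ^ β) a,
    finrank_euclideanSpace_fin, smul_eq_mul, funext hpt, integral_const_mul] at hcov
  exact (mul_left_cancel₀ (pow_ne_zero n hlam.ne') hcov).symm

theorem stmt_18_general (n : ℕ) (hn : 3 ≤ n) (α β : ℝ)
    (hsum : α + β = 2 * (n : ℝ) / ((n : ℝ) - 2))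
    (hβ : β < (n : ℝ) / ((n : ℝ) - 2)) (hβ1 : 1 ≤ β) :
    ∃ C : ℝ, 0 < C ∧
      ∀ (a b : EuclideanSpace ℝ (Fin n)) (lam mu : ℝ), 0 < lam → 0 < mu →
        (∫ x, bubble n a lam x ^ α * bubble n b mu x ^ β)
          ≤ C * ((mu / lam + lam / mu + lam * mu * ‖a - b‖ ^ 2) ^
              (-(((n : ℝ) - 2) / 2))) ^ β := by
  have hn2 : (0 : ℝ) < n - 2 := by
    have : (3 : ℝ) ≤ n := by exact_mod_cast hn
    linarith
  have hαβ : ((n : ℝ) - 2) / 2 * α + ((n : ℝ) - 2) / 2 * β = n := by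
    rw [← mul_add, hsum]
    field_simp
  have hqn : 2 * (((n : ℝ) - 2) / 2 * β) < n := by
    have := (lt_div_iff₀ hn2).1 hβ
    linarith
  obtain ⟨C, hC, hbound⟩ := exists_integral_one_add_norm_sq_rpow_mul_div_rpow_le
    (volume : Measure (EuclideanSpace ℝ (Fin n))) (p := ((n : ℝ) - 2) / 2 * α)
    (q := ((n : ℝ) - 2) / 2 * β) (mul_pos (half_pos hn2) (by linarith))
    (by rwa [finrank_euclideanSpace_fin]) (by rwa [finrank_euclideanSpace_fin])
  refine ⟨C, hC, fun a b lam mu hlam hmu => ?_⟩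
  have hD : mu / lam + lam / mu + lam * mu * ‖a - b‖ ^ 2 =
      mu / lam + 1 / (mu / lam) + mu / lam * ‖lam • (b - a)‖ ^ 2 := by
    rw [norm_smul, norm_sub_rev, Real.norm_of_nonneg hlam.le]
    field_simp
  rw [integral_bubble_rpow_mul_bubble_rpow hαβ a b hlam hmu, hD, ← Real.rpow_mul (by positivity),
    neg_mul]
  exact hbound _ _ (div_pos hmu hlam)

/-- For exponents `α + β = 2n/(n−2)` with `α > n/(n−2) > β ≥ 1` there is a constant
`C = C(n,β) > 0` with `∫ U_{a,λ}^α·U_{b,μ}^β ≤ C·ε^β`, where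
`ε = (μ/λ + λ/μ + λμ|a−b|²)^{−(n−2)/2}` is the bubble interaction. -/
theorem stmt_18 (n : ℕ) (hn : 3 ≤ n) (α β : ℝ)
    (hsum : α + β = 2 * (n : ℝ) / ((n : ℝ) - 2))
    (hα : (n : ℝ) / ((n : ℝ) - 2) < α)
    (hβ : β < (n : ℝ) / ((n : ℝ) - 2)) (hβ1 : 1 ≤ β) :
    ∃ C : ℝ, 0 < C ∧
      ∀ (a b : EuclideanSpace ℝ (Fin n)) (lam mu : ℝ), 0 < lam → 0 < mu →
        (∫ x, bubble n a lam x ^ α * bubble n b mu x ^ β)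
          ≤ C * ((mu / lam + lam / mu + lam * mu * ‖a - b‖ ^ 2) ^
              (-(((n : ℝ) - 2) / 2))) ^ β :=
  stmt_18_general n hn α β hsum hβ hβ1
end
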